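/- Let a ∈ X, let n ≥ 1, and let P ∈ ℚ⟨X⟩ be homogeneous of degree n (a ℚ-linear combination of words of length n) with the coefficient of the word a^n in P equal to zero. If [ι a, P] is a Lie polynomial, then P = (1/n)·r(P); in particular P is a Lie polynomial. -/

import Mathlib

/-!
Setting: `ℚ⟨X⟩ = FreeAlgebra ℚ X`, the free associative `ℚ`-algebra on a type `X` of
non-commuting variables, with the commutator bracket `⁅P,Q⁆ = P*Q - Q*P` and canonical
inclusion `ι = FreeAlgebra.ι ℚ`.  The words (elements of `FreeMonoid X`) form a `ℚ`-basis
`FreeAlgebra.basisFreeMonoid ℚ X` of `ℚ⟨X⟩`.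
-/

/-- The right-normed bracketing of a word:
`[ι x₁,[ι x₂,[…,[ι x_{n−1}, ι xₙ]…]]]`, with the empty word mapped to `0`. -/
noncomputable def rword {X : Type*} : List X → FreeAlgebra ℚ X
  | [] => 0
  | [x] => FreeAlgebra.ι ℚ x
  | x :: y :: ys => ⁅FreeAlgebra.ι ℚ x, rword (y :: ys)⁆

/-- The right-normed bracketing map `r : ℚ⟨X⟩ → ℚ⟨X⟩`: the unique `ℚ`-linear map sending the
basis word `w₁w₂⋯wₙ` to `[ι w₁,[ι w₂,[…,[ι w_{n−1}, ι wₙ]…]]]` (and the empty word `1` to `0`,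
and a single letter `x` to `ι x`). -/
noncomputable def rmap (X : Type*) : FreeAlgebra ℚ X →ₗ[ℚ] FreeAlgebra ℚ X :=
  (FreeAlgebra.basisFreeMonoid ℚ X).constr ℚ fun w => rword w.toList

/-- The coefficient of the word `w` in `P`, with respect to the basis of words of `ℚ⟨X⟩`. -/
noncomputable def coeffWord {X : Type*} (P : FreeAlgebra ℚ X) (w : FreeMonoid X) : ℚ :=
  (FreeAlgebra.basisFreeMonoid ℚ X).repr P w

attribute [local instance 100] LieRing.ofAssociativeRing

/-- `P` is a Lie polynomial: it belongs to the Lie subalgebra of `ℚ⟨X⟩` (under the commutator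
bracket) generated by the image of `ι`, i.e. the smallest `ℚ`-subspace of `ℚ⟨X⟩` containing
`ι(X)` and closed under commutators. -/
def IsLiePolynomial {X : Type*} (P : FreeAlgebra ℚ X) : Prop :=
  P ∈ LieSubalgebra.lieSpan ℚ (FreeAlgebra ℚ X) (Set.range (FreeAlgebra.ι ℚ))

/-- `P` is homogeneous of degree `n`: a `ℚ`-linear combination of words of length `n`. -/
def IsHomogeneous {X : Type*} (n : ℕ) (P : FreeAlgebra ℚ X) : Prop :=
  P ∈ Submodule.span ℚ
    ((fun w : List X => (w.map (FreeAlgebra.ι ℚ)).prod) '' {w : List X | w.length = n})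

/-!
By the Dynkin–Specht–Wever argument, every Lie polynomial `Q` satisfies `r(Q) = deg(Q)·Q`, and
the algebra map `adHom` sending `w₁⋯wₖ` to `ad_{w₁} ∘ ⋯ ∘ ad_{wₖ}` sends `Q` to `ad_Q`. Applied to
`Q = [a, P]` these two identities give `[a, [a, r(P) - n·P]] = 0`. An element commuting with `a`
is a polynomial in `a`, so it vanishes as soon as all its coefficients of pure powers `aᵏ` do.
This is the case for the commutator `[a, r(P) - n·P]`, and then for `r(P) - n·P` itself, since
`r(P)` has no pure power of degree `≥ 2` and `P` has none at all.
-/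

open FreeAlgebra

section Words

variable {R X : Type*} [CommSemiring R]

theorem FreeAlgebra.basisFreeMonoid_ofList (l : List X) :
    basisFreeMonoid R X (FreeMonoid.ofList l) = (l.map (ι R)).prod := by
  rw [basisFreeMonoid, Module.Basis.map_apply, Finsupp.coe_basisSingleOne]
  show equivMonoidAlgebraFreeMonoid.symm (MonoidAlgebra.single _ 1) = _
  rw [equivMonoidAlgebraFreeMonoid, AlgEquiv.ofAlgHom_symm_apply, MonoidAlgebra.lift_single,
    one_smul, FreeMonoid.lift_apply, FreeMonoid.toList_ofList]

theorem FreeAlgebra.basisFreeMonoid_mul (w v : FreeMonoid X) :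
    basisFreeMonoid R X w * basisFreeMonoid R X v = basisFreeMonoid R X (w * v) := by
  obtain ⟨l, rfl⟩ := FreeMonoid.ofList.surjective w
  obtain ⟨m, rfl⟩ := FreeMonoid.ofList.surjective v
  rw [← FreeMonoid.ofList_append, basisFreeMonoid_ofList, basisFreeMonoid_ofList,
    basisFreeMonoid_ofList, List.map_append, List.prod_append]

theorem FreeAlgebra.basisFreeMonoid_repr_apply (P : FreeAlgebra R X) (w : FreeMonoid X) :
    (basisFreeMonoid R X).repr P w = (equivMonoidAlgebraFreeMonoid P).coeff w := rfl

theorem FreeAlgebra.equivMonoidAlgebraFreeMonoid_ι (x : X) :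
    equivMonoidAlgebraFreeMonoid (ι R x) = MonoidAlgebra.single (FreeMonoid.of x) 1 := by
  simp [equivMonoidAlgebraFreeMonoid]

end Words

section Coefficients

variable {X : Type*}

theorem coeffWord_ι_mul (x : X) (P : FreeAlgebra ℚ X) (w : FreeMonoid X) :
    coeffWord (ι ℚ x * P) (FreeMonoid.of x * w) = coeffWord P w := by
  rw [coeffWord, coeffWord, basisFreeMonoid_repr_apply, basisFreeMonoid_repr_apply,
    map_mul equivMonoidAlgebraFreeMonoid,
    equivMonoidAlgebraFreeMonoid_ι, MonoidAlgebra.coeff_single_mul_eq_mul_coeff w, one_mul]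
  exact fun _ _ => mul_right_inj _

theorem coeffWord_mul_ι (x : X) (P : FreeAlgebra ℚ X) (w : FreeMonoid X) :
    coeffWord (P * ι ℚ x) (w * FreeMonoid.of x) = coeffWord P w := by
  rw [coeffWord, coeffWord, basisFreeMonoid_repr_apply, basisFreeMonoid_repr_apply,
    map_mul equivMonoidAlgebraFreeMonoid,
    equivMonoidAlgebraFreeMonoid_ι, MonoidAlgebra.coeff_mul_single_eq_coeff_mul w, mul_one]
  exact fun _ _ => mul_left_inj _

theorem coeffWord_mul_ι_of_ne {x y : X} (hxy : y ≠ x) (P : FreeAlgebra ℚ X) (w : FreeMonoid X) :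
    coeffWord (P * ι ℚ x) (w * FreeMonoid.of y) = 0 := by
  rw [coeffWord, basisFreeMonoid_repr_apply, map_mul equivMonoidAlgebraFreeMonoid,
    equivMonoidAlgebraFreeMonoid_ι]
  refine MonoidAlgebra.coeff_mul_single_of_forall_mul_ne _ _ fun v h => hxy ?_
  simpa using congrArg (fun u : FreeMonoid X => u.toList.getLast?) h.symm

end Coefficients

section Centralizer

variable {X : Type*} {a : X} {S : FreeAlgebra ℚ X}

theorem coeffWord_eq_zero_of_commute (hS : Commute (ι ℚ a) S) (w : List X)
    (hw : ∃ b ∈ w, b ≠ a) : coeffWord S (FreeMonoid.ofList w) = 0 := by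
  have hcoeff := fun u => congrArg (coeffWord · u) hS.eq
  suffices ∀ m : List X, coeffWord S (FreeMonoid.ofList (m ++ w)) = 0 from this []
  induction w using List.reverseRecOn with
  | nil => simp at hw
  | append_singleton l x ih =>
    intro m
    by_cases hx : x = a
    · subst hx
      obtain ⟨b, hb, hba⟩ := hw
      have hbl : b ∈ l := by simpa [hba] using hb
      -- rotate the trailing `a` to the front
      have hrot := hcoeff (FreeMonoid.of x * FreeMonoid.ofList (m ++ l) * FreeMonoid.of x)
      rw [coeffWord_mul_ι, mul_assoc, coeffWord_ι_mul] at hrot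
      rw [← List.append_assoc]
      exact hrot.trans (ih ⟨b, hbl, hba⟩ (x :: m))
    · have hlast := hcoeff (FreeMonoid.of a * (FreeMonoid.ofList (m ++ l) * FreeMonoid.of x))
      rw [coeffWord_ι_mul, ← mul_assoc, coeffWord_mul_ι_of_ne hx] at hlast
      rw [← List.append_assoc]
      exact hlast

end Centralizer

section PureCoeffs

variable {X : Type*} [DecidableEq X] (a : X)

noncomputable def pureCoeffs : FreeAlgebra ℚ X →ₐ[ℚ] Polynomial ℚ :=
  lift ℚ fun x => if x = a then Polynomial.X else 0

theorem pureCoeffs_prod_map_ι (l : List X) :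
    pureCoeffs a (l.map (ι ℚ)).prod =
      if ∀ x ∈ l, x = a then Polynomial.X ^ l.length else 0 := by
  induction l with
  | nil => simp
  | cons x l ih =>
    rw [List.map_cons, List.prod_cons, map_mul, ih, pureCoeffs, lift_ι_apply, List.length_cons]
    by_cases hx : x = a <;> by_cases hl : ∀ x ∈ l, x = a <;> simp [hx, hl, pow_succ']

theorem pureCoeffs_coeff (P : FreeAlgebra ℚ X) (k : ℕ) :
    (pureCoeffs a P).coeff k = coeffWord P (FreeMonoid.ofList (List.replicate k a)) := by
  suffices (Polynomial.lcoeff ℚ k).comp (pureCoeffs a).toLinearMap =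
      (Finsupp.lapply _).comp (basisFreeMonoid ℚ X).repr.toLinearMap from
    LinearMap.congr_fun this P
  classical
  refine (basisFreeMonoid ℚ X).ext fun w => ?_
  obtain ⟨l, rfl⟩ := FreeMonoid.ofList.surjective w
  rw [LinearMap.comp_apply, LinearMap.comp_apply, AlgHom.toLinearMap_apply, LinearEquiv.coe_coe,
    Module.Basis.repr_self, Finsupp.lapply_apply, Finsupp.single_apply, Polynomial.lcoeff_apply,
    basisFreeMonoid_ofList, pureCoeffs_prod_map_ι, FreeMonoid.ofList.apply_eq_iff_eq]
  by_cases hl : ∀ x ∈ l, x = a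
  · rw [if_pos hl, Polynomial.coeff_X_pow]
    by_cases hk : k = l.length
    · rw [if_pos hk, if_pos (List.eq_replicate_iff.2 ⟨hk.symm, hl⟩)]
    · rw [if_neg hk, if_neg fun h => hk (by rw [h, List.length_replicate])]
  · rw [if_neg hl, Polynomial.coeff_zero, if_neg]
    rintro rfl
    exact hl fun x hx => List.eq_of_mem_replicate hx

theorem pureCoeffs_lie (P Q : FreeAlgebra ℚ X) : pureCoeffs a ⁅P, Q⁆ = 0 := by
  rw [Ring.lie_def, map_sub, map_mul, map_mul, mul_comm, sub_self]

theorem eq_zero_of_commute_of_pureCoeffs_eq_zero {S : FreeAlgebra ℚ X} (hS : Commute (ι ℚ a) S)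
    (h : pureCoeffs a S = 0) : S = 0 := by
  refine (basisFreeMonoid ℚ X).repr.map_eq_zero_iff.1 (Finsupp.ext fun w => ?_)
  rw [Finsupp.zero_apply, ← coeffWord, ← FreeMonoid.ofList_toList w]
  by_cases hw : ∃ b ∈ w.toList, b ≠ a
  · exact coeffWord_eq_zero_of_commute hS _ hw
  · push Not at hw
    rw [List.eq_replicate_iff.2 ⟨rfl, hw⟩, ← pureCoeffs_coeff, h, Polynomial.coeff_zero]

end PureCoeffs

section Homogeneous

variable {X : Type*} {n : ℕ} {P : FreeAlgebra ℚ X}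

theorem IsHomogeneous.linearMap_eq {M : Type*} [AddCommMonoid M] [Module ℚ M]
    (hP : IsHomogeneous n P) {f g : FreeAlgebra ℚ X →ₗ[ℚ] M}
    (h : ∀ l : List X, l.length = n → f (l.map (ι ℚ)).prod = g (l.map (ι ℚ)).prod) :
    f P = g P :=
  LinearMap.eqOn_span' (by rintro _ ⟨l, hl, rfl⟩; exact h l hl) hP

theorem isHomogeneous_ι (x : X) : IsHomogeneous 1 (ι ℚ x) :=
  Submodule.subset_span ⟨[x], rfl, by simp⟩

theorem IsHomogeneous.coeffWord_eq_zero (hP : IsHomogeneous n P) {w : FreeMonoid X}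
    (hw : w.length ≠ n) : coeffWord P w = 0 := by
  classical
  refine hP.linearMap_eq (f := (Finsupp.lapply w).comp (basisFreeMonoid ℚ X).repr.toLinearMap)
    (g := 0) fun l hl => ?_
  rw [← basisFreeMonoid_ofList, LinearMap.comp_apply, LinearEquiv.coe_coe, Module.Basis.repr_self,
    Finsupp.lapply_apply, Finsupp.single_apply, if_neg, LinearMap.zero_apply]
  rintro rfl
  exact hw hl

theorem IsHomogeneous.pureCoeffs_eq_zero [DecidableEq X] {a : X} (hP : IsHomogeneous n P)
    (h : coeffWord P (FreeMonoid.ofList (List.replicate n a)) = 0) : pureCoeffs a P = 0 := by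
  ext k
  rw [pureCoeffs_coeff, Polynomial.coeff_zero]
  rcases eq_or_ne k n with rfl | hk
  · exact h
  · exact hP.coeffWord_eq_zero (by simpa [FreeMonoid.length] using hk)

noncomputable def eulerOp (X : Type*) : FreeAlgebra ℚ X →ₗ[ℚ] FreeAlgebra ℚ X :=
  (basisFreeMonoid ℚ X).constr ℚ fun w => (w.length : ℚ) • basisFreeMonoid ℚ X w

theorem eulerOp_basisFreeMonoid (w : FreeMonoid X) :
    eulerOp X (basisFreeMonoid ℚ X w) = (w.length : ℚ) • basisFreeMonoid ℚ X w :=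
  Module.Basis.constr_basis _ _ _ _

theorem eulerOp_mul (A B : FreeAlgebra ℚ X) :
    eulerOp X (A * B) = eulerOp X A * B + A * eulerOp X B := by
  suffices (LinearMap.mul ℚ _).compr₂ (eulerOp X) =
      (LinearMap.mul ℚ _).comp (eulerOp X) + (LinearMap.mul ℚ _).compl₂ (eulerOp X) from
    LinearMap.congr_fun₂ this A B
  refine LinearMap.ext_basis (basisFreeMonoid ℚ X) (basisFreeMonoid ℚ X) fun w v => ?_
  simp only [LinearMap.compr₂_apply, LinearMap.add_apply, LinearMap.comp_apply,
    LinearMap.compl₂_apply, LinearMap.mul_apply', basisFreeMonoid_mul, eulerOp_basisFreeMonoid,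
    smul_mul_assoc, mul_smul_comm, FreeMonoid.length_mul, Nat.cast_add, add_smul]

theorem IsHomogeneous.eulerOp_eq (hP : IsHomogeneous n P) : eulerOp X P = (n : ℚ) • P :=
  hP.linearMap_eq (g := (n : ℚ) • LinearMap.id) fun l hl => by
    rw [← basisFreeMonoid_ofList, eulerOp_basisFreeMonoid, ← hl]
    rfl

theorem eulerOp_ι (x : X) : eulerOp X (ι ℚ x) = ι ℚ x := by
  rw [(isHomogeneous_ι x).eulerOp_eq, Nat.cast_one, one_smul]

end Homogeneous

section RightNormed

variable {X : Type*}

noncomputable def adHom (X : Type*) : FreeAlgebra ℚ X →ₐ[ℚ] Module.End ℚ (FreeAlgebra ℚ X) :=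
  lift ℚ fun x => LieAlgebra.ad ℚ _ (ι ℚ x)

theorem adHom_ι_apply (x : X) (v : FreeAlgebra ℚ X) : adHom X (ι ℚ x) v = ⁅ι ℚ x, v⁆ := by
  rw [adHom, lift_ι_apply, LieAlgebra.ad_apply]

theorem rword_cons (x : X) {l : List X} (hl : l ≠ []) : rword (x :: l) = ⁅ι ℚ x, rword l⁆ := by
  obtain ⟨y, l, rfl⟩ := List.exists_cons_of_ne_nil hl
  rfl

theorem rword_append (w : List X) {v : List X} (hv : v ≠ []) :
    rword (w ++ v) = adHom X (w.map (ι ℚ)).prod (rword v) := by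
  induction w with
  | nil => simp
  | cons x w ih =>
    rw [List.cons_append, rword_cons x (List.append_ne_nil_of_right_ne_nil w hv), ih,
      List.map_cons, List.prod_cons, map_mul, Module.End.mul_apply, adHom_ι_apply]

theorem rmap_prod_map_ι (l : List X) : rmap X (l.map (ι ℚ)).prod = rword l := by
  rw [← basisFreeMonoid_ofList]
  exact Module.Basis.constr_basis _ _ _ _

theorem rmap_ι (x : X) : rmap X (ι ℚ x) = ι ℚ x := by
  simpa [rword] using rmap_prod_map_ι [x]

theorem rmap_mul (A B : FreeAlgebra ℚ X) :
    rmap X (A * B) = adHom X A (rmap X B) + algebraMapInv B • rmap X A := by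
  suffices (LinearMap.mul ℚ _).compr₂ (rmap X) =
      LinearMap.id.compl₁₂ (adHom X).toLinearMap (rmap X) +
        (LinearMap.lsmul ℚ _).flip.compl₁₂ (rmap X) (algebraMapInv (R := ℚ)).toLinearMap from
    LinearMap.congr_fun₂ this A B
  refine LinearMap.ext_basis (basisFreeMonoid ℚ X) (basisFreeMonoid ℚ X) fun w v => ?_
  obtain ⟨l, rfl⟩ := FreeMonoid.ofList.surjective w
  obtain ⟨m, rfl⟩ := FreeMonoid.ofList.surjective v
  simp only [LinearMap.compr₂_apply, LinearMap.add_apply, LinearMap.compl₁₂_apply,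
    LinearMap.mul_apply', LinearMap.id_apply, LinearMap.flip_apply, LinearMap.lsmul_apply,
    AlgHom.toLinearMap_apply, basisFreeMonoid_ofList, ← List.prod_append, ← List.map_append,
    rmap_prod_map_ι]
  rcases m with _ | ⟨y, m⟩
  · simp [rword]
  · rw [rword_append l (List.cons_ne_nil y m), List.map_cons, List.prod_cons, map_mul,
      algebraMapInv, lift_ι_apply, Pi.zero_apply, zero_mul, zero_smul, add_zero]

end RightNormed

theorem pureCoeffs_rmap {X : Type*} [DecidableEq X] (a : X) (P : FreeAlgebra ℚ X) :
    pureCoeffs a (rmap X P) = Polynomial.monomial 1 (coeffWord P (FreeMonoid.of a)) := by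
  classical
  suffices (pureCoeffs a).toLinearMap ∘ₗ rmap X = Polynomial.monomial 1 ∘ₗ
      Finsupp.lapply (FreeMonoid.of a) ∘ₗ (basisFreeMonoid ℚ X).repr.toLinearMap from
    LinearMap.congr_fun this P
  refine (basisFreeMonoid ℚ X).ext fun w => ?_
  obtain ⟨l, rfl⟩ := FreeMonoid.ofList.surjective w
  rw [LinearMap.comp_apply, LinearMap.comp_apply, LinearMap.comp_apply, LinearEquiv.coe_coe,
    Module.Basis.repr_self, Finsupp.lapply_apply, Finsupp.single_apply, AlgHom.toLinearMap_apply,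
    basisFreeMonoid_ofList, rmap_prod_map_ι, ← FreeMonoid.ofList_singleton,
    FreeMonoid.ofList.apply_eq_iff_eq]
  match l with
  | [] => simp [rword]
  | [x] => by_cases hx : x = a <;> simp [rword, pureCoeffs, hx, Polynomial.X]
  | x :: y :: l => simp [rword, pureCoeffs_lie]

section DynkinSpechtWever

variable {X : Type*}

noncomputable def dswSubalgebra (X : Type*) : LieSubalgebra ℚ (FreeAlgebra ℚ X) where
  carrier := {u | algebraMapInv u = 0 ∧ (∀ v, adHom X u v = ⁅u, v⁆) ∧ rmap X u = eulerOp X u}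
  zero_mem' := ⟨map_zero _, fun v => by simp, by simp⟩
  add_mem' := by
    rintro x y ⟨hx₀, hxad, hxr⟩ ⟨hy₀, hyad, hyr⟩
    refine ⟨by rw [map_add, hx₀, hy₀, add_zero], fun v => ?_, by rw [map_add, map_add, hxr, hyr]⟩
    rw [map_add, LinearMap.add_apply, hxad, hyad, add_lie]
  smul_mem' := by
    rintro c x ⟨hx₀, hxad, hxr⟩
    refine ⟨by rw [map_smul, hx₀, smul_zero], fun v => ?_, by rw [map_smul, map_smul, hxr]⟩
    rw [map_smul, LinearMap.smul_apply, hxad, smul_lie]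
  lie_mem' := by
    rintro x y ⟨hx₀, hxad, hxr⟩ ⟨hy₀, hyad, hyr⟩
    refine ⟨by rw [Ring.lie_def, map_sub, map_mul, map_mul, hx₀, hy₀, mul_zero, sub_zero],
      fun v => ?_, ?_⟩
    · rw [Ring.lie_def, map_sub, map_mul, map_mul, LinearMap.sub_apply, Module.End.mul_apply,
        Module.End.mul_apply, hxad, hyad, hxad, hyad, ← Ring.lie_def, lie_lie]
    · rw [Ring.lie_def, map_sub, map_sub, rmap_mul, rmap_mul, hx₀, hy₀, hxad, hyad, hxr, hyr,
        eulerOp_mul, eulerOp_mul, zero_smul, zero_smul, add_zero, add_zero, Ring.lie_def,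
        Ring.lie_def]
      noncomm_ring

theorem lieSpan_le_dswSubalgebra :
    LieSubalgebra.lieSpan ℚ (FreeAlgebra ℚ X) (Set.range (ι ℚ)) ≤ dswSubalgebra X := by
  rw [LieSubalgebra.lieSpan_le]
  rintro _ ⟨x, rfl⟩
  exact ⟨by rw [algebraMapInv, lift_ι_apply, Pi.zero_apply], adHom_ι_apply x,
    by rw [rmap_ι, eulerOp_ι]⟩

theorem IsLiePolynomial.rmap_eq_eulerOp {Q : FreeAlgebra ℚ X} (hQ : IsLiePolynomial Q) :
    rmap X Q = eulerOp X Q :=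
  (lieSpan_le_dswSubalgebra hQ).2.2

theorem IsLiePolynomial.adHom_apply {Q : FreeAlgebra ℚ X} (hQ : IsLiePolynomial Q)
    (v : FreeAlgebra ℚ X) : adHom X Q v = ⁅Q, v⁆ :=
  (lieSpan_le_dswSubalgebra hQ).2.1 v

theorem isLiePolynomial_rword (l : List X) : IsLiePolynomial (rword l) := by
  induction l with
  | nil => exact zero_mem _
  | cons x l ih =>
    rcases eq_or_ne l [] with rfl | hl
    · exact LieSubalgebra.subset_lieSpan ⟨x, rfl⟩
    · rw [rword_cons x hl]
      exact LieSubalgebra.lie_mem _ (LieSubalgebra.subset_lieSpan ⟨x, rfl⟩) ih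

theorem isLiePolynomial_rmap (P : FreeAlgebra ℚ X) : IsLiePolynomial (rmap X P) := by
  suffices LinearMap.range (rmap X) ≤
      (LieSubalgebra.lieSpan ℚ (FreeAlgebra ℚ X) (Set.range (ι ℚ))).toSubmodule from
    this ⟨P, rfl⟩
  rw [rmap, Module.Basis.constr_range, Submodule.span_le]
  rintro _ ⟨w, rfl⟩
  exact isLiePolynomial_rword _

end DynkinSpechtWever

theorem lie_ι_lie_ι_rmap {X : Type*} (a : X) {n : ℕ} {P : FreeAlgebra ℚ X}
    (hP : IsHomogeneous n P) (hQ : IsLiePolynomial ⁅ι ℚ a, P⁆) :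
    ⁅ι ℚ a, ⁅ι ℚ a, rmap X P⁆⁆ = (n : ℚ) • ⁅ι ℚ a, ⁅ι ℚ a, P⁆⁆ := by
  have hrQ : ⁅ι ℚ a, rmap X P⁆ + algebraMapInv P • ι ℚ a - adHom X P (ι ℚ a) =
      ((n : ℚ) + 1) • ⁅ι ℚ a, P⁆ := by
    have hεa : algebraMapInv (ι ℚ a) = 0 := by rw [algebraMapInv, lift_ι_apply, Pi.zero_apply]
    have hEQ : eulerOp X ⁅ι ℚ a, P⁆ = ((n : ℚ) + 1) • ⁅ι ℚ a, P⁆ := by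
      rw [Ring.lie_def, map_sub, eulerOp_mul, eulerOp_mul, eulerOp_ι, hP.eulerOp_eq,
        smul_mul_assoc, mul_smul_comm]
      module
    rw [← hEQ, ← hQ.rmap_eq_eulerOp, Ring.lie_def (ι ℚ a) P, map_sub, rmap_mul, rmap_mul,
      adHom_ι_apply, rmap_ι, hεa, zero_smul, add_zero]
  have hadQ : ⁅ι ℚ a, adHom X P (ι ℚ a)⁆ = ⁅⁅ι ℚ a, P⁆, ι ℚ a⁆ := by
    rw [← hQ.adHom_apply, Ring.lie_def (ι ℚ a) P, map_sub, map_mul, map_mul, LinearMap.sub_apply,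
      Module.End.mul_apply, Module.End.mul_apply, adHom_ι_apply, adHom_ι_apply, lie_self,
      map_zero, sub_zero]
  have h := congrArg (⁅ι ℚ a, ·⁆) hrQ
  simp only [lie_add, lie_sub, lie_smul, lie_self, smul_zero, add_zero, hadQ,
    ← lie_skew ⁅ι ℚ a, P⁆] at h
  linear_combination (norm := module) h

/-- If `P` is homogeneous of degree `n ≥ 1` with vanishing coefficient of `a^n`, and
`[ι a, P]` is a Lie polynomial, then `P = (1/n)·r(P)`; in particular `P` is a Lie
polynomial. -/
theorem stmt_12 {X : Type*} (a : X) (n : ℕ) (hn : 1 ≤ n) (P : FreeAlgebra ℚ X)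
    (hHom : IsHomogeneous n P)
    (hcoeff : coeffWord P (FreeMonoid.ofList (List.replicate n a)) = 0)
    (hLie : IsLiePolynomial ⁅FreeAlgebra.ι ℚ a, P⁆) :
    P = (1 / (n : ℚ)) • rmap X P ∧ IsLiePolynomial P := by
  classical
  have hpure : pureCoeffs a P = 0 := hHom.pureCoeffs_eq_zero hcoeff
  set S := rmap X P - (n : ℚ) • P
  have hS : ⁅ι ℚ a, ⁅ι ℚ a, S⁆⁆ = 0 := by
    rw [lie_sub, lie_sub, lie_smul, lie_smul, lie_ι_lie_ι_rmap a hHom hLie, sub_self]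
  have hT : ⁅ι ℚ a, S⁆ = 0 :=
    eq_zero_of_commute_of_pureCoeffs_eq_zero a (commute_iff_lie_eq.2 hS) (pureCoeffs_lie a _ _)
  have hS0 : S = 0 := by
    refine eq_zero_of_commute_of_pureCoeffs_eq_zero a (commute_iff_lie_eq.2 hT) ?_
    rw [map_sub, map_smul, pureCoeffs_rmap, ← FreeMonoid.ofList_singleton, ← List.replicate_one,
      ← pureCoeffs_coeff, hpure, Polynomial.coeff_zero, map_zero, smul_zero, sub_zero]
  have hrP : rmap X P = (n : ℚ) • P := sub_eq_zero.1 hS0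
  have hP : P = (1 / (n : ℚ)) • rmap X P := by
    rw [hrP, smul_smul, one_div_mul_cancel (Nat.cast_ne_zero.2 (Nat.pos_iff_ne_zero.1 hn)),
      one_smul]
  exact ⟨hP, hP ▸ (LieSubalgebra.lieSpan _ _ _).smul_mem _ (isLiePolynomial_rmap P)⟩
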